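/- arXiv:2507.20931 — 2 statements merged into one kernel-verified Lean document; each statement's English description precedes it below -/
import Mathlib

section
/- Let R be a von Neumann algebra on a Hilbert space H in standard form with cyclic and separating vector ξ, and let T be a positive self-adjoint non-singular operator affiliated with R with ξ ∈ D(T). Then Tξ is a cyclic vector for R, i.e., the closure of {A(Tξ) : A ∈ R} equals H. -/
open scoped ComplexOrder

noncomputable section

/-- A (possibly unbounded) operator `T` is affiliated with the von Neumann algebra `R` if
`U T ⊆ T U` for every unitary `U` in the commutant `R'`. -/
def Affiliated {H : Type*} [NormedAddCommGroup H] [InnerProductSpace ℂ H] [CompleteSpace H]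
    (R : VonNeumannAlgebra H) (T : H →ₗ.[ℂ] H) : Prop :=
  ∀ U : H →L[ℂ] H, U ∈ unitary (H →L[ℂ] H) → U ∈ R.commutant →
    ∀ x : T.domain, ∃ h : U (x : H) ∈ T.domain, T ⟨U (x : H), h⟩ = U (T x)

/-!
Let `K` be the closure of `R (Tξ)`. It is `R`-invariant, so the reflection `U = 2 P_K - 1` is a
unitary in `R'`. Affiliation gives `T (U ξ) = U (T ξ) = T ξ`, so `U ξ = ξ` by injectivity of `T`,
i.e. `ξ ∈ K`. Hence `K` contains the dense set `R ξ`, and `K = H`.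
-/

open Submodule Module.End Function

namespace VonNeumannAlgebra

variable {H : Type*} [NormedAddCommGroup H] [InnerProductSpace ℂ H] [CompleteSpace H]
  (R : VonNeumannAlgebra H)

def cyclicSubspace (η : H) : Submodule ℂ H :=
  ((Subalgebra.toSubmodule R.toSubalgebra).map
    (ContinuousLinearMap.apply ℂ H η : (H →L[ℂ] H) →ₗ[ℂ] H)).topologicalClosure

theorem dense_iff_cyclicSubspace_eq_top (η : H) :
    Dense {y : H | ∃ A ∈ R, A η = y} ↔ R.cyclicSubspace η = ⊤ :=
  dense_iff_topologicalClosure_eq_top (s := (Subalgebra.toSubmodule R.toSubalgebra).map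
    (ContinuousLinearMap.apply ℂ H η : (H →L[ℂ] H) →ₗ[ℂ] H))

instance (η : H) : (R.cyclicSubspace η).HasOrthogonalProjection :=
  inferInstanceAs (topologicalClosure _).HasOrthogonalProjection

theorem self_mem_cyclicSubspace (η : H) : η ∈ R.cyclicSubspace η :=
  le_topologicalClosure _ ⟨1, one_mem R, rfl⟩

theorem cyclicSubspace_mem_invtSubmodule {A : H →L[ℂ] H} (hA : A ∈ R) (η : H) :
    R.cyclicSubspace η ∈ invtSubmodule (A : H →ₗ[ℂ] H) := by
  rw [mem_invtSubmodule_iff_mapsTo]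
  refine Set.MapsTo.closure ?_ A.continuous
  rintro _ ⟨B, hB, rfl⟩
  exact ⟨A * B, (mul_mem hA hB : A * B ∈ R), rfl⟩

theorem cyclicSubspace_le_of_mem {ξ η : H} (h : ξ ∈ R.cyclicSubspace η) :
    R.cyclicSubspace ξ ≤ R.cyclicSubspace η := by
  refine topologicalClosure_minimal _ ?_ (isClosed_topologicalClosure _)
  rintro _ ⟨A, hA, rfl⟩
  exact R.cyclicSubspace_mem_invtSubmodule hA η h

theorem starProjection_mem_commutant {K : Submodule ℂ H} [K.HasOrthogonalProjection]
    (hK : ∀ A ∈ R, K ∈ invtSubmodule (A : H →ₗ[ℂ] H)) : K.starProjection ∈ R.commutant := by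
  rw [mem_commutant_iff]
  intro A hA
  refine (ContinuousLinearMap.IsIdempotentElem.commute_iff
    K.isIdempotentElem_starProjection |>.mpr ⟨?_, ?_⟩).eq.symm
  · simpa using hK A hA
  · rw [ker_starProjection]
    refine ContinuousLinearMap.orthogonal_mem_invtSubmodule ?_
    rw [← ContinuousLinearMap.star_eq_adjoint]
    exact hK _ (star_mem hA)

theorem reflection_mem_commutant {K : Submodule ℂ H} [K.HasOrthogonalProjection]
    (hK : ∀ A ∈ R, K ∈ invtSubmodule (A : H →ₗ[ℂ] H)) :
    (K.reflection : H →L[ℂ] H) ∈ R.commutant := by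
  have hrefl : (K.reflection : H →L[ℂ] H) = K.starProjection + K.starProjection - 1 := by
    ext x; simp [reflection_apply, two_smul]
  have hP := R.starProjection_mem_commutant hK
  rw [hrefl]
  exact sub_mem (add_mem hP hP) (one_mem _)

end VonNeumannAlgebra

theorem Submodule.reflection_mem_unitary {𝕜 H : Type*} [RCLike 𝕜] [NormedAddCommGroup H]
    [InnerProductSpace 𝕜 H] [CompleteSpace H] (K : Submodule 𝕜 H) [K.HasOrthogonalProjection] :
    (K.reflection : H →L[𝕜] H) ∈ unitary (H →L[𝕜] H) :=
  (Unitary.linearIsometryEquiv.symm K.reflection).property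

theorem Affiliated.isFixedPt_of_isFixedPt_apply {H : Type*} [NormedAddCommGroup H]
    [InnerProductSpace ℂ H] [CompleteSpace H] {R : VonNeumannAlgebra H} {T : H →ₗ.[ℂ] H}
    (haff : Affiliated R T) (hinj : ∀ x : T.domain, T x = 0 → (x : H) = 0)
    {U : H →L[ℂ] H} (hU : U ∈ unitary (H →L[ℂ] H)) (hUR : U ∈ R.commutant) {x : T.domain}
    (hx : IsFixedPt U (T x)) : IsFixedPt U x := by
  obtain ⟨hUx, hTU⟩ := haff U hU hUR x
  exact sub_eq_zero.mp <| hinj (⟨U x, hUx⟩ - x) (by rw [T.map_sub, hTU, hx, sub_self])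

theorem cyclic_of_positive_nonsingular_affiliated_general
    {H : Type*} [NormedAddCommGroup H] [InnerProductSpace ℂ H] [CompleteSpace H]
    (R : VonNeumannAlgebra H) (ξ : H)
    (hcyc : Dense {y : H | ∃ A ∈ R, A ξ = y})
    (T : H →ₗ.[ℂ] H)
    (hinj : ∀ x : T.domain, T x = 0 → (x : H) = 0)
    (haff : Affiliated R T) (hξ : ξ ∈ T.domain) :
    Dense {y : H | ∃ A ∈ R, A (T ⟨ξ, hξ⟩) = y} := by
  set K := R.cyclicSubspace (T ⟨ξ, hξ⟩)
  have hKinv : ∀ A ∈ R, K ∈ invtSubmodule (A : H →ₗ[ℂ] H) :=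
    fun A hA ↦ R.cyclicSubspace_mem_invtSubmodule hA _
  have hξK : ξ ∈ K := by
    rw [← reflection_eq_self_iff]
    exact haff.isFixedPt_of_isFixedPt_apply hinj K.reflection_mem_unitary
      (R.reflection_mem_commutant hKinv)
      (reflection_mem_subspace_eq_self (R.self_mem_cyclicSubspace _))
  rw [R.dense_iff_cyclicSubspace_eq_top] at hcyc ⊢
  exact top_le_iff.mp (hcyc ▸ R.cyclicSubspace_le_of_mem hξK)

/-- Let `R` be a von Neumann algebra in standard form with cyclic and
separating vector `ξ`, and let `T` be a positive self-adjoint non-singular operator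
affiliated with `R` with `ξ ∈ D(T)`. Then `Tξ` is a cyclic vector for `R`, i.e. the closure
of `{A (Tξ) : A ∈ R}` is all of `H`. -/
theorem cyclic_of_positive_nonsingular_affiliated
    {H : Type*} [NormedAddCommGroup H] [InnerProductSpace ℂ H] [CompleteSpace H]
    (R : VonNeumannAlgebra H) (ξ : H)
    (hcyc : Dense {y : H | ∃ A ∈ R, A ξ = y})
    (hsep : ∀ A ∈ R, A ξ = 0 → A = 0)
    (T : H →ₗ.[ℂ] H) (hsa : IsSelfAdjoint T)
    (hpos : ∀ x : T.domain, 0 ≤ (inner ℂ (x : H) (T x) : ℂ))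
    (hinj : ∀ x : T.domain, T x = 0 → (x : H) = 0)
    (haff : Affiliated R T) (hξ : ξ ∈ T.domain) :
    Dense {y : H | ∃ A ∈ R, A (T ⟨ξ, hξ⟩) = y} :=
  cyclic_of_positive_nonsingular_affiliated_general R ξ hcyc T hinj haff hξ
end
end

section
/- Let 𝔄 be a C*-algebra with state ω and GNS triple (H_ω, π_ω, ξ_ω), and let H₀ be a positive self-adjoint operator on H_ω with ξ_ω ∈ D(H₀^{1/2}) such that ⟨H₀^{1/2} π_ω(a*a) H₀^{1/2} ξ_ω, ξ_ω⟩ (interpreted via spectral projections as lim_n ⟨H₀ E_n π_ω(a*a) ξ_ω, ξ_ω⟩) equals ψ(a*a) for a second state ψ on 𝔄, for all a ∈ 𝔄. Then the map W₀ : π_ψ(a)ξ_ψ ↦ π_ω(a) H₀^{1/2} ξ_ω is well-defined and extends to a linear isometry W : H_ψ → H_ω satisfying W π_ψ(a) = π_ω(a) W for all a ∈ 𝔄. -/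
open scoped ComplexOrder

noncomputable section

/-- A state on a unital complex *-algebra: a linear, unital, positive functional. -/
def IsState {A : Type*} [Ring A] [StarRing A] [Algebra ℂ A] (ω : A → ℂ) : Prop :=
  (∀ a b, ω (a + b) = ω a + ω b) ∧ (∀ (c : ℂ) (a : A), ω (c • a) = c * ω a) ∧
  ω 1 = 1 ∧ ∀ a, 0 ≤ ω (star a * a)

/-- A GNS triple for the functional `ω`: a *-representation `π` of `A` on a Hilbert space
with a cyclic vector `ξ` such that `ω a = ⟨π(a) ξ, ξ⟩`.  Any such triple is unitarily
equivalent to the GNS representation of `ω`. -/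
structure GNSTriple (A : Type*) [Ring A] [StarRing A] [Algebra ℂ A] [StarModule ℂ A]
    (ω : A → ℂ) where
  space : Type
  [nacg : NormedAddCommGroup space]
  [ips : InnerProductSpace ℂ space]
  [cpl : CompleteSpace space]
  π : A →⋆ₐ[ℂ] (space →L[ℂ] space)
  ξ : space
  cyclic : Dense {y : space | ∃ a : A, π a ξ = y}
  repr : ∀ a : A, ω a = (inner ℂ (π a ξ) ξ : ℂ)

attribute [instance] GNSTriple.nacg GNSTriple.ips GNSTriple.cpl

/-- Unitary equivalence of two GNS representations. -/
def GNSTriple.UEquiv {A : Type*} [Ring A] [StarRing A] [Algebra ℂ A] [StarModule ℂ A]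
    {ω ψ : A → ℂ} (P : GNSTriple A ω) (Q : GNSTriple A ψ) : Prop :=
  ∃ W : P.space ≃ₗᵢ[ℂ] Q.space, ∀ (a : A) (x : P.space), W (P.π a x) = Q.π a (W x)

/-! The vectors `π_ψ(a) ξ_ψ` and `π_ω(a) K ξ_ω` have the same norm, both squares being
`ψ(a* a)`. Hence `π_ψ(a) ξ_ψ ↦ π_ω(a) K ξ_ω` is a well-defined isometry on the dense orbit of
`ξ_ψ` and extends by continuity; the extension intertwines the representations because, by
multiplicativity of `π_ψ` and `π_ω`, it does so on that orbit. -/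

section Extension

variable {𝕜 E Eₗ F : Type*} [NormedField 𝕜] [AddCommGroup E] [Module 𝕜 E]
  [SeminormedAddCommGroup Eₗ] [NormedSpace 𝕜 Eₗ]
  [NormedAddCommGroup F] [NormedSpace 𝕜 F] [CompleteSpace F]
  {f : E →ₗ[𝕜] F} {e : E →ₗ[𝕜] Eₗ}

theorem LinearMap.norm_extendOfNorm_apply (h_dense : DenseRange e)
    (h_norm : ∀ x, ‖f x‖ = ‖e x‖) (x : Eₗ) : ‖f.extendOfNorm e x‖ = ‖x‖ := by
  have h_bound : ∃ C, ∀ x, ‖f x‖ ≤ C * ‖e x‖ := ⟨1, fun x => by rw [one_mul, h_norm]⟩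
  refine h_dense.induction ?_ (isClosed_eq (by fun_prop) continuous_norm) x
  rintro _ ⟨y, rfl⟩
  rw [extendOfNorm_eq h_dense h_bound, h_norm]

theorem LinearMap.exists_linearIsometry_apply_eq_of_norm_eq (h_dense : DenseRange e)
    (h_norm : ∀ x, ‖f x‖ = ‖e x‖) : ∃ W : Eₗ →ₗᵢ[𝕜] F, ∀ x, W (e x) = f x :=
  ⟨⟨(f.extendOfNorm e).toLinearMap, norm_extendOfNorm_apply h_dense h_norm⟩,
    extendOfNorm_eq h_dense ⟨1, fun x => by rw [one_mul, h_norm]⟩⟩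

end Extension

section Representation

variable {R A E F : Type*} [Semiring R] [Mul A]
  [TopologicalSpace E] [AddCommMonoid E] [Module R E]
  [TopologicalSpace F] [T2Space F] [AddCommMonoid F] [Module R F]

theorem intertwines_of_apply_orbit_eq {Gρ Gσ : Type*}
    [FunLike Gρ A (E →L[R] E)] [MulHomClass Gρ A (E →L[R] E)]
    [FunLike Gσ A (F →L[R] F)] [MulHomClass Gσ A (F →L[R] F)]
    {ρ : Gρ} {σ : Gσ} {ξ : E} {η : F} (hξ : DenseRange fun a => ρ a ξ)
    {W : E → F} (hW_cont : Continuous W) (hW : ∀ a, W (ρ a ξ) = σ a η) (a : A) (x : E) :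
    W (ρ a x) = σ a (W x) := by
  refine hξ.induction_on x (isClosed_eq (by fun_prop) (by fun_prop)) fun b => ?_
  simp only [← mul_apply_eq_comp, ← map_mul, hW]

end Representation

section StarRepresentation

variable {𝕜 A H : Type*} [RCLike 𝕜] [Semiring A] [Algebra 𝕜 A] [StarRing A]
  [NormedAddCommGroup H] [InnerProductSpace 𝕜 H] [CompleteSpace H]

def StarAlgHom.orbit (ρ : A →⋆ₐ[𝕜] (H →L[𝕜] H)) (v : H) : A →ₗ[𝕜] H :=
  (ContinuousLinearMap.apply 𝕜 H v).toLinearMap ∘ₗ ρ.toAlgHom.toLinearMap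

theorem StarAlgHom.inner_map_star_mul_self_apply (ρ : A →⋆ₐ[𝕜] (H →L[𝕜] H)) (a : A) (v : H) :
    inner 𝕜 (ρ (star a * a) v) v = ((‖ρ a v‖ ^ 2 : ℝ) : 𝕜) := by
  rw [map_mul, map_star, mul_apply_eq_comp, ContinuousLinearMap.star_eq_adjoint,
    ContinuousLinearMap.adjoint_inner_left, inner_self_eq_norm_sq_to_K, RCLike.ofReal_pow]

end StarRepresentation

theorem isometry_from_radonNikodym_sqrt_general
    {A : Type*} [Ring A] [StarRing A] [Algebra ℂ A] [StarModule ℂ A]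
    (ω ψ : A → ℂ)
    (P : GNSTriple A ω) (Q : GNSTriple A ψ)
    (K : P.space →ₗ.[ℂ] P.space)
    (hξ : P.ξ ∈ K.domain)
    (hkey : ∀ a : A,
      ψ (star a * a) = (inner ℂ (P.π (star a * a) (K ⟨P.ξ, hξ⟩)) (K ⟨P.ξ, hξ⟩) : ℂ)) :
    ∃ W : Q.space →ₗᵢ[ℂ] P.space,
      (∀ a : A, W (Q.π a Q.ξ) = P.π a (K ⟨P.ξ, hξ⟩)) ∧
      ∀ (a : A) (x : Q.space), W (Q.π a x) = P.π a (W x) := by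
  set η := K ⟨P.ξ, hξ⟩
  have h_norm : ∀ a, ‖P.π.orbit η a‖ = ‖Q.π.orbit Q.ξ a‖ := fun a => by
    have h := (Q.repr (star a * a)).symm.trans (hkey a)
    rw [StarAlgHom.inner_map_star_mul_self_apply, StarAlgHom.inner_map_star_mul_self_apply] at h
    exact (sq_eq_sq₀ (norm_nonneg _) (norm_nonneg _)).1 (by exact_mod_cast h.symm)
  have h_dense : DenseRange (Q.π.orbit Q.ξ) := Q.cyclic
  obtain ⟨W, hW⟩ := LinearMap.exists_linearIsometry_apply_eq_of_norm_eq h_dense h_norm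
  exact ⟨W, hW, intertwines_of_apply_orbit_eq (ρ := Q.π) (σ := P.π) h_dense W.continuous hW⟩

/-- Let `ω`, `ψ` be states on a C*-algebra `𝔄` with GNS triples `P`
(for `ω`) and `Q` (for `ψ`), and let `K = H₀^{1/2}` be a positive self-adjoint operator on
`H_ω` with `ξ_ω ∈ D(K)` such that `⟨π_ω(a* a) K ξ_ω, K ξ_ω⟩ = ψ(a* a)` for all `a`.  Then
`W₀ : π_ψ(a) ξ_ψ ↦ π_ω(a) K ξ_ω` is well defined and extends to a linear isometry
`W : H_ψ → H_ω` intertwining `π_ψ` and `π_ω`. -/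
theorem isometry_from_radonNikodym_sqrt
    {A : Type*} [Ring A] [StarRing A] [Algebra ℂ A] [StarModule ℂ A]
    (ω ψ : A → ℂ) (hω : IsState ω) (hψ : IsState ψ)
    (P : GNSTriple A ω) (Q : GNSTriple A ψ)
    (K : P.space →ₗ.[ℂ] P.space) (hKsa : IsSelfAdjoint K)
    (hKpos : ∀ x : K.domain, 0 ≤ (inner ℂ (x : P.space) (K x) : ℂ))
    (hξ : P.ξ ∈ K.domain)
    (hkey : ∀ a : A,
      ψ (star a * a) = (inner ℂ (P.π (star a * a) (K ⟨P.ξ, hξ⟩)) (K ⟨P.ξ, hξ⟩) : ℂ)) :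
    ∃ W : Q.space →ₗᵢ[ℂ] P.space,
      (∀ a : A, W (Q.π a Q.ξ) = P.π a (K ⟨P.ξ, hξ⟩)) ∧
      ∀ (a : A) (x : Q.space), W (Q.π a x) = P.π a (W x) :=
  isometry_from_radonNikodym_sqrt_general ω ψ P Q K hξ hkey
end
end
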